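/- Let d ≥ 1 and let ρ be a symmetric non-degenerate probability measure on ℝ^d (ρ(H) < 1 for every affine hyperplane H). Then for every nonzero s ∈ ℝ^d, ∫_{ℝ^d} exp(⟨s,z⟩ − ⟨s,z⟩²/2) dρ(z) < 1; equivalently, Λ(s, −(1/2) s ᵗs) < 0 where Λ(u,A) = ln ∫_{ℝ^d} exp(⟨u,z⟩ + ⟨Az,z⟩) dρ(z). -/

import Mathlib

open MeasureTheory Filter Matrix Real

noncomputable section

/-- `T_n(x) = ∑ i, x_i ᵗx_i`. -/
def Tmat (d n : ℕ) (x : Fin n → Fin d → ℝ) : Matrix (Fin d) (Fin d) ℝ :=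
  ∑ i, Matrix.vecMulVec (x i) (x i)

/-- `S_n(x) = x_1 + … + x_n`. -/
def Svec (d n : ℕ) (x : Fin n → Fin d → ℝ) : Fin d → ℝ := ∑ i, x i

/-- the Hamiltonian `(1/2)⟨T_n⁻¹ S_n, S_n⟩`. -/
def Hfun (d n : ℕ) (x : Fin n → Fin d → ℝ) : ℝ :=
  (1 / 2) * dotProduct ((Tmat d n x)⁻¹.mulVec (Svec d n x)) (Svec d n x)

/-- normalization constant `Z_n`. -/
def Zconst (d : ℕ) (ρ : Measure (Fin d → ℝ)) (n : ℕ) : ℝ :=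
  ∫ x : Fin n → Fin d → ℝ,
    Set.indicator {x | 0 < (Tmat d n x).det} (fun x => Real.exp (Hfun d n x)) x
    ∂ Measure.pi fun _ => ρ

/-- the Curie-Weiss model of SOC `μ̃_{n,ρ}`. -/
def CW (d : ℕ) (ρ : Measure (Fin d → ℝ)) (n : ℕ) : Measure (Fin n → Fin d → ℝ) :=
  (Measure.pi fun _ => ρ).withDensity fun x =>
    Set.indicator {x | 0 < (Tmat d n x).det}
      (fun x => ENNReal.ofReal (Real.exp (Hfun d n x) / Zconst d ρ n)) x

/-- covariance matrix `Σ = ∫ z ᵗz dρ(z)`. -/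
def covM (d : ℕ) (ρ : Measure (Fin d → ℝ)) : Matrix (Fin d) (Fin d) ℝ :=
  Matrix.of fun i j => ∫ z, z i * z j ∂ρ

/-- `M₄(z) = ∑ (∫ yᵢyⱼyₖyₗ dρ) zᵢzⱼzₖzₗ`. -/
def M4 (d : ℕ) (ρ : Measure (Fin d → ℝ)) (z : Fin d → ℝ) : ℝ :=
  ∑ i : Fin d, ∑ j : Fin d, ∑ k : Fin d, ∑ l : Fin d,
    (∫ y, y i * y j * y k * y l ∂ρ) * (z i * z j * z k * z l)

/-- symmetric measure: invariant under `z ↦ -z`. -/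
def SymMeas (d : ℕ) (ρ : Measure (Fin d → ℝ)) : Prop := ρ.map (fun z => -z) = ρ

/-- condition `(*)` : some Gaussian exponential moment. -/
def CondStar (d : ℕ) (ρ : Measure (Fin d → ℝ)) : Prop :=
  ∃ v₀ > (0:ℝ), Integrable (fun z => Real.exp (v₀ * dotProduct z z)) ρ

/-- the ρ-measure of every vector hyperplane is `< 1/√e`. -/
def HypLt (d : ℕ) (ρ : Measure (Fin d → ℝ)) : Prop :=
  ∀ s : Fin d → ℝ, s ≠ 0 →
    ρ {z | dotProduct s z = 0} < ENNReal.ofReal (1 / Real.sqrt (Real.exp 1))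

/-- non-degeneracy: the ρ-measure of every affine hyperplane is `< 1`. -/
def NonDeg (d : ℕ) (ρ : Measure (Fin d → ℝ)) : Prop :=
  ∀ s : Fin d → ℝ, s ≠ 0 → ∀ c : ℝ, ρ {z | dotProduct s z = c} < 1

-- positive square root of a positive semi-definite matrix (junk value otherwise).
open scoped Classical in
def psqrt (d : ℕ) (M : Matrix (Fin d) (Fin d) ℝ) : Matrix (Fin d) (Fin d) ℝ :=
  if h : M.PosSemidef then
    (h.1.eigenvectorUnitary : Matrix (Fin d) (Fin d) ℝ) *
      Matrix.diagonal ((↑) ∘ (√·) ∘ h.1.eigenvalues) *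
      (star h.1.eigenvectorUnitary : Matrix (Fin d) (Fin d) ℝ)
  else 0

/-- Euclidean norm on `ℝ^d`. -/
def vnorm (d : ℕ) (v : Fin d → ℝ) : ℝ := Real.sqrt (dotProduct v v)

/-- Frobenius norm on `d × d` matrices. -/
def mnorm (d : ℕ) (M : Matrix (Fin d) (Fin d) ℝ) : ℝ :=
  Real.sqrt (∑ i : Fin d, ∑ j : Fin d, (M i j) ^ 2)

/-- the log-Laplace transform `Λ` of `(Z, Z ᵗZ)`, with values in `(-∞, +∞]`. -/
def Lam (d : ℕ) (ρ : Measure (Fin d → ℝ)) (u : Fin d → ℝ)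
    (A : Matrix (Fin d) (Fin d) ℝ) : EReal :=
  ENNReal.log (∫⁻ z, ENNReal.ofReal
    (Real.exp (dotProduct u z + dotProduct (A.mulVec z) z)) ∂ρ)

/-- the Cramér transform `I` of `(Z, Z ᵗZ)`. -/
def CramerI (d : ℕ) (ρ : Measure (Fin d → ℝ)) (x : Fin d → ℝ)
    (M : Matrix (Fin d) (Fin d) ℝ) : EReal :=
  ⨆ p : (Fin d → ℝ) × {A : Matrix (Fin d) (Fin d) ℝ // A.IsSymm},
    ((dotProduct x p.1 + (M * (p.2 : Matrix (Fin d) (Fin d) ℝ)).trace : ℝ) : EReal)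
      - Lam d ρ p.1 p.2

end

/-! Averaging over `z ↦ -z`, which preserves `ρ`, replaces `exp (t - t ^ 2 / 2)` at `t = ⟨s, z⟩`
by `cosh t * exp (-t ^ 2 / 2)`, which is `≤ 1` with equality only at `t = 0`. Non-degeneracy
gives the complement of the hyperplane `⟨s, z⟩ = 0` positive mass, so the integral is `< 1`;
the claim about `Λ` is the same integral in logarithmic form. -/

namespace Real

lemma cosh_lt_exp_half_sq {x : ℝ} (hx : x ≠ 0) : cosh x < exp (x ^ 2 / 2) := by
  have h_half : cosh (x / 2) ≤ exp (x ^ 2 / 8) := (cosh_le_exp_half_sq _).trans_eq (by ring_nf)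
  have h_double : cosh x = 2 * cosh (x / 2) ^ 2 - 1 := by
    have h := cosh_two_mul (x / 2)
    rw [mul_div_cancel₀ x two_ne_zero] at h
    linarith [cosh_sq (x / 2)]
  have h_one_lt : 1 < exp (x ^ 2 / 8) ^ 2 := by
    rw [← exp_nat_mul, one_lt_exp_iff]; positivity
  have h_quad : exp (x ^ 2 / 2) = (exp (x ^ 2 / 8) ^ 2) ^ 2 := by
    rw [← pow_mul, ← exp_nat_mul]; ring_nf
  rw [h_double, h_quad]
  nlinarith [pow_le_pow_left₀ (cosh_pos _).le h_half 2]

lemma cosh_mul_exp_neg_half_sq_le_one (x : ℝ) : cosh x * exp (-(x ^ 2 / 2)) ≤ 1 := by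
  rw [exp_neg, ← div_eq_mul_inv, div_le_one (exp_pos _)]
  exact cosh_le_exp_half_sq x

lemma cosh_mul_exp_neg_half_sq_lt_one {x : ℝ} (hx : x ≠ 0) : cosh x * exp (-(x ^ 2 / 2)) < 1 := by
  rw [exp_neg, ← div_eq_mul_inv, div_lt_one (exp_pos _)]
  exact cosh_lt_exp_half_sq hx

lemma exp_sub_sq_half_le (t : ℝ) : exp (t - t ^ 2 / 2) ≤ exp (1 / 2) :=
  exp_le_exp.2 (by nlinarith [sq_nonneg (t - 1)])

lemma exp_sub_sq_half_add_exp_neg (t : ℝ) :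
    exp (t - t ^ 2 / 2) + exp (-t - (-t) ^ 2 / 2) = 2 * (cosh t * exp (-(t ^ 2 / 2))) := by
  rw [cosh_eq, neg_sq, sub_eq_add_neg, sub_eq_add_neg (-t), exp_add, exp_add]
  ring

end Real

lemma integrable_exp_sub_sq_half (μ : Measure ℝ) [IsFiniteMeasure μ] :
    Integrable (fun t => exp (t - t ^ 2 / 2)) μ :=
  .of_bound (by fun_prop) (exp (1 / 2)) <| ae_of_all _ fun t => by
    rw [norm_of_nonneg (exp_pos _).le]
    exact exp_sub_sq_half_le _

lemma isNegInvariant_map_of_map_neg_eq {E F : Type*} [MeasurableSpace E] [MeasurableSpace F]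
    [Neg E] [MeasurableNeg E] [Neg F] [MeasurableNeg F]
    {μ : Measure E} (hμ : μ.map (fun z => -z) = μ) {X : E → F} (hX : Measurable X)
    (hX_odd : ∀ z, X (-z) = -X z) : (μ.map X).IsNegInvariant := by
  refine ⟨?_⟩
  rw [Measure.neg, Measure.map_map measurable_neg hX, show Neg.neg ∘ X = X ∘ Neg.neg from
    funext fun z => (hX_odd z).symm, ← Measure.map_map hX measurable_neg]
  exact congrArg _ hμ

theorem integral_exp_sub_sq_half_lt_one (ν : Measure ℝ) [IsProbabilityMeasure ν]
    [ν.IsNegInvariant] (hν : ν {0} < 1) : ∫ t, exp (t - t ^ 2 / 2) ∂ν < 1 := by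
  set h := fun t : ℝ => cosh t * exp (-(t ^ 2 / 2))
  have hi := integrable_exp_sub_sq_half ν
  have h_int : Integrable h ν := .of_bound (by fun_prop) 1 <| ae_of_all _ fun t => by
    rw [norm_of_nonneg (by positivity)]
    exact cosh_mul_exp_neg_half_sq_le_one t
  have h_symm : ∫ t, exp (t - t ^ 2 / 2) ∂ν = ∫ t, h t ∂ν := by
    have h_sum := integral_add hi hi.comp_neg
    rw [integral_neg_eq_self (fun t => exp (t - t ^ 2 / 2))] at h_sum
    simp_rw [exp_sub_sq_half_add_exp_neg, integral_const_mul] at h_sum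
    linarith
  have h_gap : 0 < ∫ t, (1 - h t) ∂ν := by
    rw [integral_pos_iff_support_of_nonneg
      (fun t => sub_nonneg.2 (cosh_mul_exp_neg_half_sq_le_one t)) ((integrable_const 1).sub h_int)]
    calc (0 : ENNReal) < ν {0}ᶜ := by
          rw [prob_compl_eq_one_sub (measurableSet_singleton 0)]
          exact tsub_pos_of_lt hν
      _ ≤ ν (Function.support fun t => 1 - h t) :=
          measure_mono fun t ht => sub_ne_zero.2 (cosh_mul_exp_neg_half_sq_lt_one ht).ne'
  rw [integral_sub (integrable_const 1) h_int, integral_const, probReal_univ, one_smul] at h_gap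
  linarith

lemma vecMulVec_self_mulVec_dotProduct {d : ℕ} (s z : Fin d → ℝ) :
    vecMulVec s s *ᵥ z ⬝ᵥ z = (s ⬝ᵥ z) ^ 2 := by
  rw [vecMulVec_mulVec, op_smul_eq_smul, smul_dotProduct, smul_eq_mul, sq, dotProduct_comm s z]

lemma Lam_neg_half_vecMulVec (d : ℕ) (ρ : Measure (Fin d → ℝ)) (s : Fin d → ℝ) :
    Lam d ρ s (-((1 / 2 : ℝ) • vecMulVec s s)) =
      ENNReal.log (∫⁻ z, ENNReal.ofReal (exp (s ⬝ᵥ z - (s ⬝ᵥ z) ^ 2 / 2)) ∂ρ) := by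
  unfold Lam
  congr with z
  rw [neg_mulVec, neg_dotProduct, smul_mulVec, smul_dotProduct, vecMulVec_self_mulVec_dotProduct,
    smul_eq_mul]
  congr 2; ring

theorem integral_exp_lt_one_general
    (d : ℕ) (ρ : Measure (Fin d → ℝ)) [IsProbabilityMeasure ρ]
    (hsym : SymMeas d ρ) (hnd : NonDeg d ρ) (s : Fin d → ℝ) (hs : s ≠ 0) :
    (∫ z, Real.exp (dotProduct s z - (dotProduct s z) ^ 2 / 2) ∂ρ) < 1 ∧
    Lam d ρ s (-((1/2 : ℝ) • Matrix.vecMulVec s s)) < 0 := by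
  have hX : Measurable (s ⬝ᵥ ·) := (continuous_const.dotProduct continuous_id).measurable
  have := Measure.isProbabilityMeasure_map (μ := ρ) hX.aemeasurable
  have := isNegInvariant_map_of_map_neg_eq hsym hX (dotProduct_neg s)
  have h_lt : ∫ z, exp (s ⬝ᵥ z - (s ⬝ᵥ z) ^ 2 / 2) ∂ρ < 1 := by
    rw [← integral_map (f := fun t => exp (t - t ^ 2 / 2)) hX.aemeasurable (by fun_prop)]
    refine integral_exp_sub_sq_half_lt_one _ ?_
    rw [Measure.map_apply hX (measurableSet_singleton 0)]
    exact hnd s hs 0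
  refine ⟨h_lt, ?_⟩
  have h_int : Integrable (fun z => exp (s ⬝ᵥ z - (s ⬝ᵥ z) ^ 2 / 2)) ρ :=
    (integrable_exp_sub_sq_half _).comp_measurable hX
  rw [Lam_neg_half_vecMulVec,
    ← ofReal_integral_eq_lintegral_ofReal h_int (ae_of_all _ fun _ => (exp_pos _).le)]
  exact ENNReal.log_lt_zero_iff.2 (ENNReal.ofReal_lt_one.2 h_lt)

/-- for `s ≠ 0`, `∫ exp(⟨s,z⟩ - ⟨s,z⟩²/2) dρ < 1`, i.e.
`Λ(s, -(1/2) s ᵗs) < 0`. -/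
theorem integral_exp_lt_one
    (d : ℕ) (hd : 1 ≤ d) (ρ : Measure (Fin d → ℝ)) [IsProbabilityMeasure ρ]
    (hsym : SymMeas d ρ) (hnd : NonDeg d ρ) (s : Fin d → ℝ) (hs : s ≠ 0) :
    (∫ z, Real.exp (dotProduct s z - (dotProduct s z) ^ 2 / 2) ∂ρ) < 1 ∧
    Lam d ρ s (-((1/2 : ℝ) • Matrix.vecMulVec s s)) < 0 :=
  integral_exp_lt_one_general d ρ hsym hnd s hs
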